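/- Let $G = (V,E)$ be a finite graph all of whose vertices have even degree, and suppose the expected vertex cover time of $G$ by simple random walk (from any start vertex) is at most $C$. Then for any rule $\mathcal{R}$, the expected edge cover time of $G$ by greedy random walk is at most $|E| + C$. -/

import Mathlib

open MeasureTheory ProbabilityTheory ENNReal

namespace GRW

variable {V : Type*}

/-- The set of edges traversed by a trajectory `x` during the time interval `[0, t]`. -/
def traversed (x : ℕ → V) (t : ℕ) : Set (Sym2 V) :=
  {e | ∃ s : ℕ, 0 < s ∧ s ≤ t ∧ e = s(x (s - 1), x s)}

/-- The neighbours of `v` reachable along an edge not yet traversed by the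
trajectory `x` up to time `t` (i.e. the endpoints of the edges in `J_t(v)`). -/
def freshNbrs (G : SimpleGraph V) (x : ℕ → V) (t : ℕ) (v : V) : Set V :=
  {w | G.Adj v w ∧ s(v, w) ∉ traversed x t}

/-- The event that the process `X` follows the trajectory `x` up to time `t`. -/
def prefixEvent {Ω : Type*} (X : ℕ → Ω → V) (t : ℕ) (x : ℕ → V) : Set Ω :=
  {ω | ∀ i ≤ t, X i ω = x i}

/-- `X` is a greedy random walk on `G` (with an arbitrary rule `𝓡`): conditioned on any
trajectory prefix of positive probability, the next step goes along an untraversed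
incident edge whenever one exists, and otherwise to a uniformly random neighbour. -/
def IsGRW {Ω : Type*} [MeasurableSpace Ω] (G : SimpleGraph V) [G.LocallyFinite]
    (μ : Measure Ω) (X : ℕ → Ω → V) : Prop :=
  (∀ t, @Measurable Ω V _ ⊤ (X t)) ∧
  ∀ (t : ℕ) (x : ℕ → V), μ (prefixEvent X t x) ≠ 0 →
    ((freshNbrs G x t (x t)).Nonempty →
      (μ[|prefixEvent X t x]) {ω | X (t + 1) ω ∈ freshNbrs G x t (x t)} = 1) ∧
    (freshNbrs G x t (x t) = ∅ →
      ∀ w : V, G.Adj (x t) w →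
        (μ[|prefixEvent X t x]) {ω | X (t + 1) ω = w} = ((G.degree (x t) : ℝ≥0∞))⁻¹) ∧
    (μ[|prefixEvent X t x]) {ω | G.Adj (x t) (X (t + 1) ω)} = 1

/-- `Y` is a simple random walk on `G`: conditioned on any trajectory prefix of positive
probability, the next step goes to a uniformly random neighbour. -/
def IsSRW {Ω : Type*} [MeasurableSpace Ω] (G : SimpleGraph V) [G.LocallyFinite]
    (μ : Measure Ω) (Y : ℕ → Ω → V) : Prop :=
  (∀ t, @Measurable Ω V _ ⊤ (Y t)) ∧
  ∀ (t : ℕ) (x : ℕ → V), μ (prefixEvent Y t x) ≠ 0 →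
    (∀ w : V, G.Adj (x t) w →
      (μ[|prefixEvent Y t x]) {ω | Y (t + 1) ω = w} = ((G.degree (x t) : ℝ≥0∞))⁻¹) ∧
    (μ[|prefixEvent Y t x]) {ω | G.Adj (x t) (Y (t + 1) ω)} = 1

/-- The edge cover time of the process `X` on the graph `G`, as an extended natural
number (`⊤` if the edges are never all traversed). -/
noncomputable def edgeCoverTime (G : SimpleGraph V) {Ω : Type*} (X : ℕ → Ω → V)
    (ω : Ω) : ℕ∞ :=
  sInf ((↑) '' {t : ℕ | G.edgeSet ⊆ traversed (fun s => X s ω) t})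

/-- The vertex cover time of the process `Y`, as an extended natural number. -/
noncomputable def vertexCoverTime {Ω : Type*} (Y : ℕ → Ω → V) (ω : Ω) : ℕ∞ :=
  sInf ((↑) '' {t : ℕ | ∀ v : V, ∃ s ≤ t, Y s ω = v})

end GRW


/-!
Call a time `s` *simple* if every edge at the walker's position `X s` has already been traversed;
these are exactly the times at which the greedy walk takes a uniformly random step. Every other
step traverses a new edge, so at most `|E|` times are not simple and the `k`-th simple time is at
most `k + |E|`.

Since all degrees are even, a greedy stretch that starts right after a simple time is a trail
which can only get stuck, i.e. reach the next simple time, back at its starting vertex (count the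
parity of traversed edges at each vertex). Hence the positions at consecutive simple times are one
uniform step apart, and the walk observed at its simple times is a simple random walk `Y`. Once
`Y` has visited every vertex, by its `k`-th step say, every edge has been traversed by the `k`-th
simple time. So the edge cover time of the greedy walk is at most the vertex cover time of `Y`
plus `|E|`, and taking expectations gives the bound.
-/

namespace GRW

open Set
open scoped Finset Classical

section Trajectory

variable {V : Type*}

lemma traversed_zero (p : ℕ → V) : traversed p 0 = ∅ :=
  eq_empty_of_forall_notMem fun _ ⟨_, h0, h, _⟩ => by omega

lemma traversed_succ (p : ℕ → V) (t : ℕ) :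
    traversed p (t + 1) = insert s(p t, p (t + 1)) (traversed p t) := by
  ext e
  constructor
  · rintro ⟨s, hs0, hst, rfl⟩
    rcases Nat.le_succ_iff.1 hst with h | rfl
    · exact Or.inr ⟨s, hs0, h, rfl⟩
    · exact Or.inl rfl
  · rintro (rfl | ⟨s, hs0, hst, rfl⟩)
    · exact ⟨t + 1, t.succ_pos, le_rfl, rfl⟩
    · exact ⟨s, hs0, hst.trans t.le_succ, rfl⟩

lemma traversed_mono (p : ℕ → V) : Monotone (traversed p) :=
  fun _ _ h _ ⟨s, hs0, hst, he⟩ => ⟨s, hs0, hst.trans h, he⟩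

lemma mem_traversed_of_lt (p : ℕ → V) {s t : ℕ} (h : s < t) :
    s(p s, p (s + 1)) ∈ traversed p t :=
  ⟨s + 1, s.succ_pos, h, rfl⟩

lemma dependsOn_traversed (t : ℕ) : DependsOn (traversed (V := V) · t) (Iic t) := by
  intro p q h
  ext e
  constructor <;> rintro ⟨s, hs0, hst, rfl⟩ <;> refine ⟨s, hs0, hst, ?_⟩ <;>
    rw [h s hst, h (s - 1) ((s.sub_le 1).trans hst)]

end Trajectory

section GreedyPath

variable {V : Type*} (G : SimpleGraph V)

def IsSimpleTime (p : ℕ → V) (s : ℕ) : Prop := freshNbrs G p s (p s) = ∅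

structure IsGreedyPath (p : ℕ → V) : Prop where
  adj : ∀ s, G.Adj (p s) (p (s + 1))
  fresh : ∀ s, ¬ IsSimpleTime G p s → p (s + 1) ∈ freshNbrs G p s (p s)

noncomputable def traversedDegree (p : ℕ → V) (t : ℕ) (v : V) : ℕ :=
  (G.incidenceSet v ∩ traversed p t).ncard

def IsNthSimpleTime (p : ℕ → V) (k s : ℕ) : Prop :=
  IsSimpleTime G p s ∧ Nat.count (IsSimpleTime G p) s = k

/-- Phrased with `s ≤ L` rather than `Nat.nth`, so that it visibly depends only on `p` up to
time `L`. -/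
def CompletesTrace (x : ℕ → V) (t L : ℕ) (p : ℕ → V) : Prop :=
  IsNthSimpleTime G p t L ∧ ∀ i ≤ t, ∃ s ≤ L, IsNthSimpleTime G p i s ∧ p s = x i

variable {G}

lemma dependsOn_freshNbrs (s : ℕ) : DependsOn (fun p => freshNbrs G p s (p s)) (Iic s) := by
  intro p q h
  simp only [freshNbrs, dependsOn_traversed s h, h s self_mem_Iic]

lemma dependsOn_isSimpleTime (s : ℕ) : DependsOn (IsSimpleTime G · s) (Iic s) :=
  fun _ _ h => congrArg (· = ∅) (dependsOn_freshNbrs s h)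

lemma dependsOn_isNthSimpleTime (k s : ℕ) : DependsOn (IsNthSimpleTime G · k s) (Iic s) := by
  intro p q h
  have hcount : Nat.count (IsSimpleTime G p) s = Nat.count (IsSimpleTime G q) s := by
    simp only [Nat.count_eq_card_filter_range]
    refine congrArg _ (Finset.filter_congr fun u hu => ?_)
    refine (dependsOn_isSimpleTime u fun i hi => h i ?_).to_iff
    exact (mem_Iic.1 hi).trans (Finset.mem_range.1 hu).le
  simp only [IsNthSimpleTime, dependsOn_isSimpleTime s h, hcount]

lemma dependsOn_completesTrace (x : ℕ → V) (t L : ℕ) :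
    DependsOn (CompletesTrace G x t L) (Iic L) := by
  intro p q h
  refine propext (and_congr (dependsOn_isNthSimpleTime t L h).to_iff
    (forall₂_congr fun i _ => exists_congr fun s => and_congr_right fun hs => ?_))
  have hs' : ∀ j ∈ Iic s, p j = q j := fun j hj => h j ((mem_Iic.1 hj).trans hs)
  simp only [dependsOn_isNthSimpleTime (G := G) i s hs', h s hs]

lemma IsSimpleTime.mem_traversed {p : ℕ → V} {s : ℕ} (hs : IsSimpleTime G p s) {w : V}
    (hw : G.Adj (p s) w) : s(p s, w) ∈ traversed p s :=
  not_not.1 fun h => eq_empty_iff_forall_notMem.1 hs w ⟨hw, h⟩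

lemma IsSimpleTime.traversedDegree_eq [G.LocallyFinite] {p : ℕ → V} {s : ℕ}
    (hs : IsSimpleTime G p s) : traversedDegree G p s (p s) = G.degree (p s) := by
  have hsub : G.incidenceSet (p s) ⊆ traversed p s := by
    rintro e ⟨he, hpe⟩
    obtain ⟨w, rfl⟩ := Sym2.mem_iff_exists.1 hpe
    exact hs.mem_traversed he
  rw [traversedDegree, inter_eq_self_of_subset_left hsub, ncard_eq_toFinset_card',
    toFinset_card, G.card_incidenceSet_eq_degree]

lemma traversedDegree_zero (p : ℕ → V) (v : V) : traversedDegree G p 0 v = 0 := by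
  rw [traversedDegree, traversed_zero, inter_empty, ncard_empty]

lemma IsNthSimpleTime.unique {p : ℕ → V} {k s s' : ℕ} (h : IsNthSimpleTime G p k s)
    (h' : IsNthSimpleTime G p k s') : s = s' :=
  Nat.count_injective h.1 h'.1 (h.2.trans h'.2.symm)

namespace CompletesTrace

variable {x p : ℕ → V} {t L : ℕ}

lemma unique {L' : ℕ} (h : CompletesTrace G x t L p) (h' : CompletesTrace G x t L' p) :
    L = L' :=
  h.1.unique h'.1

lemma isSimpleTime (h : CompletesTrace G x t L p) : IsSimpleTime G p L := h.1.1

lemma apply_eq (h : CompletesTrace G x t L p) : p L = x t := by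
  obtain ⟨s, -, hs, hx⟩ := h.2 t le_rfl
  rwa [h.1.unique hs]

end CompletesTrace

namespace IsGreedyPath

variable {p : ℕ → V}

lemma traversed_succ_of_isSimpleTime (hp : IsGreedyPath G p) {s : ℕ}
    (hs : IsSimpleTime G p s) : traversed p (s + 1) = traversed p s := by
  rw [traversed_succ, insert_eq_of_mem (hs.mem_traversed (hp.adj s))]

lemma edge_notMem_traversed (hp : IsGreedyPath G p) {s : ℕ} (hs : ¬ IsSimpleTime G p s) :
    s(p s, p (s + 1)) ∉ traversed p s :=
  (hp.fresh s hs).2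

lemma injOn_edge (hp : IsGreedyPath G p) :
    InjOn (fun s => s(p s, p (s + 1))) {s | ¬ IsSimpleTime G p s} := by
  intro a ha b hb (hab : s(p a, p (a + 1)) = s(p b, p (b + 1)))
  by_contra hne
  rcases Nat.lt_or_gt_of_ne hne with h | h
  · exact hp.edge_notMem_traversed hb (hab ▸ mem_traversed_of_lt p h)
  · exact hp.edge_notMem_traversed ha (hab.symm ▸ mem_traversed_of_lt p h)

lemma le_count_add_card_edgeFinset [Fintype G.edgeSet] (hp : IsGreedyPath G p) (t : ℕ) :
    t ≤ Nat.count (IsSimpleTime G p) t + #G.edgeFinset := by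
  have hcard : #{s ∈ Finset.range t | ¬ IsSimpleTime G p s} ≤ #G.edgeFinset :=
    Finset.card_le_card_of_injOn _ (fun s _ => G.mem_edgeFinset.2 (hp.adj s))
      (hp.injOn_edge.mono fun s hs => (Finset.mem_filter.1 hs).2)
  have := Finset.card_filter_add_card_filter_not (s := Finset.range t) (IsSimpleTime G p ·)
  rw [Finset.card_range] at this
  rw [Nat.count_eq_card_filter_range]
  omega

lemma infinite_setOf_isSimpleTime [Finite G.edgeSet] (hp : IsGreedyPath G p) :
    {s | IsSimpleTime G p s}.Infinite := by
  have := Fintype.ofFinite G.edgeSet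
  intro hfin
  have h := hp.le_count_add_card_edgeFinset (#hfin.toFinset + #G.edgeFinset + 1)
  have := Nat.count_le_card (p := IsSimpleTime G p) hfin (#hfin.toFinset + #G.edgeFinset + 1)
  omega

lemma nth_le_add_card_edgeFinset [Fintype G.edgeSet] (hp : IsGreedyPath G p) (k : ℕ) :
    Nat.nth (IsSimpleTime G p) k ≤ k + #G.edgeFinset := by
  have := hp.le_count_add_card_edgeFinset (k + #G.edgeFinset + 1)
  exact Nat.le_of_lt_succ (Nat.nth_lt_of_lt_count (n := k + #G.edgeFinset + 1) (by omega))

lemma isNthSimpleTime_iff [Finite G.edgeSet] (hp : IsGreedyPath G p) {k s : ℕ} :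
    IsNthSimpleTime G p k s ↔ Nat.nth (IsSimpleTime G p) k = s := by
  have hinf := hp.infinite_setOf_isSimpleTime
  refine ⟨fun h => h.2 ▸ Nat.nth_count h.1, ?_⟩
  rintro rfl
  exact ⟨Nat.nth_mem_of_infinite hinf k, Nat.count_nth_of_infinite hinf k⟩

lemma completesTrace_iff [Finite G.edgeSet] (hp : IsGreedyPath G p) {x : ℕ → V} {t L : ℕ} :
    CompletesTrace G x t L p ↔
      Nat.nth (IsSimpleTime G p) t = L ∧ ∀ i ≤ t, p (Nat.nth (IsSimpleTime G p) i) = x i := by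
  refine ⟨fun h => ⟨hp.isNthSimpleTime_iff.1 h.1, fun i hi => ?_⟩, ?_⟩
  · obtain ⟨s, -, hs, hx⟩ := h.2 i hi
    rwa [hp.isNthSimpleTime_iff.1 hs]
  · rintro ⟨rfl, hx⟩
    exact ⟨hp.isNthSimpleTime_iff.2 rfl, fun i hi => ⟨_,
      (Nat.nth_strictMono hp.infinite_setOf_isSimpleTime).monotone hi,
      hp.isNthSimpleTime_iff.2 rfl, hx i hi⟩⟩

lemma edgeSet_subset_traversed_nth [Finite G.edgeSet] (hp : IsGreedyPath G p) {k : ℕ}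
    (h : ∀ v, ∃ i ≤ k, p (Nat.nth (IsSimpleTime G p) i) = v) :
    G.edgeSet ⊆ traversed p (Nat.nth (IsSimpleTime G p) k) := by
  have hinf := hp.infinite_setOf_isSimpleTime
  intro e he
  induction e using Sym2.ind with
  | _ a b =>
    obtain ⟨i, hik, rfl⟩ := h a
    exact traversed_mono p ((Nat.nth_strictMono hinf).monotone hik)
      ((Nat.nth_mem_of_infinite hinf i).mem_traversed he)

variable [G.LocallyFinite]

lemma traversedDegree_succ (hp : IsGreedyPath G p) {s : ℕ} (hs : ¬ IsSimpleTime G p s) (v : V) :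
    traversedDegree G p (s + 1) v =
      traversedDegree G p s v + ((if v = p s then 1 else 0) + if v = p (s + 1) then 1 else 0) := by
  have hne : p s ≠ p (s + 1) := (hp.adj s).ne
  rw [traversedDegree, traversedDegree, traversed_succ]
  by_cases hv : v = p s ∨ v = p (s + 1)
  · have hinc : s(p s, p (s + 1)) ∈ G.incidenceSet v := ⟨hp.adj s, Sym2.mem_iff.2 hv⟩
    rw [inter_insert_of_mem hinc, ncard_insert_of_notMem
      (fun h => hp.edge_notMem_traversed hs h.2) ((G.incidenceSet v).toFinite.inter_of_left _)]
    rcases hv with rfl | rfl <;> simp [hne, hne.symm]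
  · have hinc : s(p s, p (s + 1)) ∉ G.incidenceSet v := fun h => hv (Sym2.mem_iff.1 h.2)
    rw [not_or] at hv
    rw [inter_insert_of_notMem hinc, if_neg hv.1, if_neg hv.2]
    rfl

/-- Between simple times the walk is a trail, so the parity of the traversed degree of `v`
changes only when `v` is one of the two endpoints. -/
lemma even_traversedDegree_add (hp : IsGreedyPath G p) {a b : ℕ} (hab : a ≤ b)
    (hg : ∀ u, a ≤ u → u < b → ¬ IsSimpleTime G p u) (v : V) :
    Even (traversedDegree G p b v + traversedDegree G p a v +
      ((if v = p a then 1 else 0) + if v = p b then 1 else 0)) := by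
  induction b, hab using Nat.le_induction with
  | base => exact ⟨traversedDegree G p a v + if v = p a then 1 else 0, by ring⟩
  | succ n hn ih =>
    have ih := ih fun u h1 h2 => hg u h1 (by omega)
    rw [hp.traversedDegree_succ (hg n hn n.lt_succ_self)]
    rw [Nat.even_iff] at ih ⊢
    split_ifs at ih ⊢ <;> omega

lemma apply_eq_and_even_traversedDegree (hp : IsGreedyPath G p)
    (heven : ∀ v, Even (G.degree v)) {a b : ℕ} (hab : a ≤ b)
    (hg : ∀ u, a ≤ u → u < b → ¬ IsSimpleTime G p u) (hb : IsSimpleTime G p b)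
    (ha : ∀ v, Even (traversedDegree G p a v)) :
    p b = p a ∧ ∀ v, Even (traversedDegree G p b v) := by
  have hclosed : p b = p a := by
    by_contra hne
    have h := hp.even_traversedDegree_add hab hg (p b)
    rw [hb.traversedDegree_eq, if_neg hne, if_pos rfl] at h
    have h1 := ha (p b)
    have h2 := heven (p b)
    rw [Nat.even_iff] at h h1 h2
    omega
  refine ⟨hclosed, fun v => ?_⟩
  have h := hp.even_traversedDegree_add hab hg v
  have h1 := ha v
  rw [hclosed] at h
  rw [Nat.even_iff] at h h1 ⊢
  split_ifs at h <;> omega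

lemma apply_nth_succ_and_even_traversedDegree [Finite G.edgeSet] (hp : IsGreedyPath G p)
    (heven : ∀ v, Even (G.degree v)) (k : ℕ)
    (hk : ∀ v, Even (traversedDegree G p (Nat.nth (IsSimpleTime G p) k) v)) :
    p (Nat.nth (IsSimpleTime G p) (k + 1)) = p (Nat.nth (IsSimpleTime G p) k + 1) ∧
      ∀ v, Even (traversedDegree G p (Nat.nth (IsSimpleTime G p) (k + 1)) v) := by
  have hinf := hp.infinite_setOf_isSimpleTime
  have hsimple := Nat.nth_mem_of_infinite hinf k
  refine hp.apply_eq_and_even_traversedDegree heven (Nat.nth_strictMono hinf k.lt_succ_self)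
    (fun u hu hlt hs => ?_) (Nat.nth_mem_of_infinite hinf _) fun v => ?_
  · have := Nat.le_nth_of_lt_nth_succ hlt hs
    omega
  · rw [traversedDegree, hp.traversed_succ_of_isSimpleTime hsimple]
    exact hk v

lemma even_traversedDegree_nth [Finite G.edgeSet] (hp : IsGreedyPath G p)
    (heven : ∀ v, Even (G.degree v)) (k : ℕ) (v : V) :
    Even (traversedDegree G p (Nat.nth (IsSimpleTime G p) k) v) := by
  induction k generalizing v with
  | zero =>
    refine (hp.apply_eq_and_even_traversedDegree heven (Nat.zero_le _) (fun u _ hu => ?_)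
      (Nat.nth_mem_of_infinite hp.infinite_setOf_isSimpleTime 0)
      fun v => by simp [traversedDegree_zero]).2 v
    rw [Nat.nth_zero] at hu
    exact Nat.notMem_of_lt_sInf hu
  | succ k ih => exact (hp.apply_nth_succ_and_even_traversedDegree heven k ih).2 v

lemma apply_nth_succ [Finite G.edgeSet] (hp : IsGreedyPath G p)
    (heven : ∀ v, Even (G.degree v)) (k : ℕ) :
    p (Nat.nth (IsSimpleTime G p) (k + 1)) = p (Nat.nth (IsSimpleTime G p) k + 1) :=
  (hp.apply_nth_succ_and_even_traversedDegree heven k (hp.even_traversedDegree_nth heven k)).1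

end IsGreedyPath

end GreedyPath

section SimpleWalk

variable {V Ω : Type*} (G : SimpleGraph V)

/-- Defined through `sInf` rather than `Nat.nth` so that its measurability reduces to that of
the events `IsNthSimpleTime`; it is `0` if there is no `k`-th simple time. -/
noncomputable def simpleTime (X : ℕ → Ω → V) (k : ℕ) (ω : Ω) : ℕ :=
  sInf {s | IsNthSimpleTime G (X · ω) k s}

noncomputable def simpleWalk (X : ℕ → Ω → V) (k : ℕ) (ω : Ω) : V :=
  X (simpleTime G X k ω) ω

variable {G} {X : ℕ → Ω → V} {ω : Ω}

namespace IsGreedyPath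

variable [Finite G.edgeSet]

lemma simpleTime_eq (hp : IsGreedyPath G (X · ω)) (k : ℕ) :
    simpleTime G X k ω = Nat.nth (IsSimpleTime G (X · ω)) k := by
  have : {s | IsNthSimpleTime G (X · ω) k s} = {Nat.nth (IsSimpleTime G (X · ω)) k} :=
    ext fun s => hp.isNthSimpleTime_iff.trans eq_comm
  rw [simpleTime, this, csInf_singleton]

lemma simpleWalk_succ [G.LocallyFinite] (hp : IsGreedyPath G (X · ω))
    (heven : ∀ v, Even (G.degree v)) (k : ℕ) :
    simpleWalk G X (k + 1) ω = X (simpleTime G X k ω + 1) ω := by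
  rw [simpleWalk, hp.simpleTime_eq, hp.simpleTime_eq]
  exact hp.apply_nth_succ heven k

lemma completesTrace_iff_simpleWalk (hp : IsGreedyPath G (X · ω)) {x : ℕ → V} {t L : ℕ} :
    CompletesTrace G x t L (X · ω) ↔
      simpleTime G X t ω = L ∧ ω ∈ prefixEvent (simpleWalk G X) t x := by
  simp only [hp.completesTrace_iff, prefixEvent, simpleWalk, hp.simpleTime_eq, mem_ofPred_eq]

lemma edgeCoverTime_le [Fintype G.edgeSet] (hp : IsGreedyPath G (X · ω)) :
    edgeCoverTime G X ω ≤ vertexCoverTime (simpleWalk G X) ω + #G.edgeFinset := by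
  rcases ((↑) '' {t : ℕ | ∀ v, ∃ s ≤ t, simpleWalk G X s ω = v} : Set ℕ∞).eq_empty_or_nonempty
    with h | h
  · simp [vertexCoverTime, h]
  obtain ⟨k, hk, hk_eq⟩ := csInf_mem h
  rw [vertexCoverTime, ← hk_eq]
  refine sInf_le ⟨k + #G.edgeFinset, fun e he => traversed_mono _
    (hp.nth_le_add_card_edgeFinset k) (hp.edgeSet_subset_traversed_nth (fun v => ?_) he), by simp⟩
  obtain ⟨i, hi, rfl⟩ := hk v
  exact ⟨i, hi, by rw [simpleWalk, hp.simpleTime_eq]⟩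

end IsGreedyPath

def trajectoryUpTo (X : ℕ → Ω → V) (L : ℕ) (ω : Ω) : Fin (L + 1) → V := fun i => X i ω

lemma preimage_trajectoryUpTo_singleton (L : ℕ) (x : ℕ → V) :
    trajectoryUpTo X L ⁻¹' {fun i : Fin (L + 1) => x i} = prefixEvent X L x := by
  ext ω
  simp [trajectoryUpTo, prefixEvent, funext_iff, Fin.forall_iff]

end SimpleWalk

section Measure

variable {V Ω : Type*} [MeasurableSpace Ω] {μ : Measure Ω}

lemma cond_eq_iff_measure_inter_eq [IsFiniteMeasure μ] {A B : Set Ω} (hB : MeasurableSet B)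
    (hB0 : μ B ≠ 0) {c : ℝ≥0∞} : μ[A|B] = c ↔ μ (B ∩ A) = c * μ B := by
  rw [cond_apply hB, ← ENNReal.div_eq_inv_mul, eq_comm,
    ENNReal.eq_div_iff hB0 (measure_ne_top _ _), mul_comm, eq_comm]

lemma measure_diff_eq_zero_of_cond_eq_one [IsFiniteMeasure μ] {A B : Set Ω}
    (hA : MeasurableSet A) (hB : MeasurableSet B) (h : μ[A|B] = 1) : μ (B \ A) = 0 := by
  by_cases hB0 : μ B = 0
  · exact measure_mono_null sdiff_subset hB0
  rw [cond_eq_iff_measure_inter_eq hB hB0, one_mul] at h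
  have := measure_inter_add_sdiff (μ := μ) B hA
  rw [h] at this
  exact (ENNReal.add_right_inj (measure_ne_top μ B)).1 (this.trans (add_zero _).symm)

lemma cond_map_apply {Ω' : Type*} [MeasurableSpace Ω'] {Φ : Ω → Ω'} (hΦ : Measurable Φ)
    {A B : Set Ω'} (hA : MeasurableSet A) (hB : MeasurableSet B) :
    (μ.map Φ)[A|B] = μ[Φ ⁻¹' A|Φ ⁻¹' B] := by
  rw [cond_apply hB, cond_apply (hΦ hB), Measure.map_apply hΦ hB,
    Measure.map_apply hΦ (hB.inter hA), preimage_inter]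

lemma measure_eq_mul_of_forall_fiber {β : Type*} [Finite β] {R : Ω → β}
    (hR : ∀ b, MeasurableSet (R ⁻¹' {b})) {S T : Set Ω} {c : ℝ≥0∞}
    (h : ∀ b, μ (R ⁻¹' {b} ∩ S) = c * μ (R ⁻¹' {b} ∩ T)) : μ S = c * μ T := by
  have := Fintype.ofFinite β
  have hsum (A : Set Ω) : μ A = ∑ b, μ (R ⁻¹' {b} ∩ A) := by
    simp_rw [← Measure.restrict_apply (hR _)]
    rw [sum_measure_preimage_singleton _ fun b _ => hR b, Finset.coe_univ, preimage_univ,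
      Measure.restrict_apply_univ]
  rw [hsum S, hsum T, Finset.mul_sum]
  exact Finset.sum_congr rfl fun b _ => h b

lemma measurable_sInf_setOf {P : ℕ → Ω → Prop} (hP : ∀ s, MeasurableSet {ω | P s ω}) :
    Measurable fun ω => sInf {s | P s ω} := by
  have hex ω : ∃ s, P s ω ∨ ∀ s', ¬ P s' ω := by
    by_cases h : ∃ s, P s ω
    · exact h.imp fun _ => Or.inl
    · exact ⟨0, Or.inr (not_exists.1 h)⟩
  have hmeas s : MeasurableSet {ω | P s ω ∨ ∀ s', ¬ P s' ω} := by
    simpa only [ofPred_or, ofPred_forall, compl_ofPred] using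
      (hP s).union (.iInter fun s' => (hP s').compl)
  convert measurable_find hex hmeas using 1
  funext ω
  by_cases h : ∃ s, P s ω
  · have hfind := (Nat.find_spec (hex ω)).resolve_right (not_forall_not.2 h)
    exact le_antisymm (Nat.sInf_le hfind) (Nat.find_min' _ (Or.inl (Nat.sInf_mem h)))
  · rw [(eq_empty_of_forall_notMem (not_exists.1 h) : {s | P s ω} = ∅), Nat.sInf_empty]
    exact (Nat.le_zero.1 (Nat.find_min' _ (Or.inr (not_exists.1 h)))).symm

lemma measurable_vertexCoverTime [Countable V] {Y : ℕ → Ω → V}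
    (hY : ∀ t, @Measurable Ω V _ ⊤ (Y t)) :
    Measurable fun ω => (vertexCoverTime Y ω : ℝ≥0∞) := by
  simp only [vertexCoverTime, sInf_image, ENat.toENNReal_iInf, iInf_eq_if,
    apply_ite ENat.toENNReal, ENat.toENNReal_top, ENat.toENNReal_coe, mem_ofPred_eq]
  refine Measurable.iInf fun t => Measurable.ite ?_ measurable_const measurable_const
  have : {ω | ∀ v, ∃ s ≤ t, Y s ω = v} = ⋂ v, ⋃ s ∈ Iic t, Y s ⁻¹' {v} := by
    ext ω
    simp
  rw [this]
  exact .iInter fun v => .biUnion (to_countable _) fun s _ => hY s trivial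

section Prefix

variable {X : ℕ → Ω → V}

lemma measurableSet_prefixEvent (hX : ∀ t, @Measurable Ω V _ ⊤ (X t)) (L : ℕ) (x : ℕ → V) :
    MeasurableSet (prefixEvent X L x) := by
  have : prefixEvent X L x = ⋂ i ∈ Iic L, X i ⁻¹' {x i} := by
    ext ω
    simp [prefixEvent]
  rw [this]
  exact .biInter (to_countable _) fun i _ => hX i trivial

variable [Finite V]

lemma measurable_trajectoryUpTo (hX : ∀ t, @Measurable Ω V _ ⊤ (X t)) (L : ℕ) :
    @Measurable Ω (Fin (L + 1) → V) _ ⊤ (trajectoryUpTo X L) := by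
  refine @measurable_to_countable' _ _ ⊤ _ _ _ fun b => ?_
  have : trajectoryUpTo X L ⁻¹' {b} = ⋂ i : Fin (L + 1), X i ⁻¹' {b i} := by
    ext ω
    simp [trajectoryUpTo, funext_iff]
  rw [this]
  exact .iInter fun i => hX i trivial

lemma measurableSet_setOf_of_dependsOn (hX : ∀ t, @Measurable Ω V _ ⊤ (X t)) {L : ℕ}
    {Q : (ℕ → V) → Prop} (hQ : DependsOn Q (Iic L)) : MeasurableSet {ω | Q (X · ω)} := by
  have : {ω | Q (X · ω)} = trajectoryUpTo X L ⁻¹' (trajectoryUpTo X L '' {ω | Q (X · ω)}) := by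
    refine (subset_preimage_image _ _).antisymm ?_
    rintro ω ⟨ω₀, hω₀, he⟩
    exact (hQ (x := (X · ω₀)) (y := (X · ω))
      fun i hi => congrFun he ⟨i, Nat.lt_succ_of_le hi⟩).mp hω₀
  rw [this]
  exact measurable_trajectoryUpTo hX L trivial

/-- An event determined by the trajectory up to time `L` is a finite disjoint union of prefix
events, so a conditional probability shared by all of these is also the conditional probability
given their union. -/
lemma measure_inter_eq_mul_of_dependsOn (hX : ∀ t, @Measurable Ω V _ ⊤ (X t)) {L : ℕ}
    {Q : (ℕ → V) → Prop} (hQ : DependsOn Q (Iic L)) {F : Set Ω} {c : ℝ≥0∞}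
    (h : ∀ x, Q x → μ (prefixEvent X L x) ≠ 0 →
      μ (prefixEvent X L x ∩ F) = c * μ (prefixEvent X L x)) :
    μ ({ω | Q (X · ω)} ∩ F) = c * μ {ω | Q (X · ω)} := by
  refine measure_eq_mul_of_forall_fiber (fun b => measurable_trajectoryUpTo hX L trivial)
    fun b => ?_
  obtain hb | ⟨ω₀, rfl⟩ := (trajectoryUpTo X L ⁻¹' {b}).eq_empty_or_nonempty
  · simp [hb]
  have hP : trajectoryUpTo X L ⁻¹' {trajectoryUpTo X L ω₀} = prefixEvent X L (X · ω₀) :=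
    preimage_trajectoryUpTo_singleton (X := X) L (X · ω₀)
  rw [hP, ← inter_assoc]
  by_cases hq : Q (X · ω₀)
  · have hsub : prefixEvent X L (X · ω₀) ⊆ {ω | Q (X · ω)} :=
      fun ω hω => (hQ (x := (X · ω₀)) (y := (X · ω)) fun i hi => (hω i hi).symm).mp hq
    rw [inter_eq_left.2 hsub]
    rcases eq_or_ne (μ (prefixEvent X L (X · ω₀))) 0 with h0 | h0
    · rw [h0, mul_zero]
      exact measure_mono_null inter_subset_left h0
    · exact h _ hq h0
  · have hdisj : prefixEvent X L (X · ω₀) ∩ {ω | Q (X · ω)} = ∅ :=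
      eq_empty_of_forall_notMem fun ω ⟨hω, hqω⟩ =>
        hq ((hQ (x := (X · ω)) (y := (X · ω₀)) hω).mp hqω)
    rw [hdisj, empty_inter, measure_empty, mul_zero]

lemma measure_eq_zero_of_forall_prefixEvent (hX : ∀ t, @Measurable Ω V _ ⊤ (X t)) (L : ℕ)
    {F : Set Ω} (h : ∀ x, μ (prefixEvent X L x) ≠ 0 → μ (prefixEvent X L x ∩ F) = 0) : μ F = 0 := by
  simpa using measure_inter_eq_mul_of_dependsOn hX (L := L) (Q := fun _ => True)
    (fun _ _ _ => rfl) (c := 0) fun x _ hx => by rw [h x hx, zero_mul]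

lemma measure_iUnion_inter_eq_mul_of_dependsOn (hX : ∀ t, @Measurable Ω V _ ⊤ (X t))
    {Q : ℕ → (ℕ → V) → Prop}
    (hQ : ∀ L, DependsOn (Q L) (Iic L)) (hQ_unique : ∀ x L L', Q L x → Q L' x → L = L')
    {F : ℕ → Set Ω} (hF : ∀ L, MeasurableSet (F L)) {c : ℝ≥0∞}
    (h : ∀ L x, Q L x → μ (prefixEvent X L x) ≠ 0 →
      μ (prefixEvent X L x ∩ F L) = c * μ (prefixEvent X L x)) :
    μ (⋃ L, {ω | Q L (X · ω)} ∩ F L) = c * μ (⋃ L, {ω | Q L (X · ω)}) := by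
  have hmeas L := measurableSet_setOf_of_dependsOn hX (hQ L)
  have hdisj : Pairwise (Function.onFun Disjoint fun L => {ω | Q L (X · ω)}) :=
    fun L L' hne => disjoint_left.2 fun ω h h' => hne (hQ_unique _ L L' h h')
  rw [measure_iUnion (hdisj.mono fun _ _ => Disjoint.mono inter_subset_left inter_subset_left)
    fun L => (hmeas L).inter (hF L), measure_iUnion hdisj hmeas, ← ENNReal.tsum_mul_left]
  exact tsum_congr fun L => measure_inter_eq_mul_of_dependsOn hX (hQ L) (h L)

end Prefix

variable {G : SimpleGraph V} {X : ℕ → Ω → V}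

lemma measurable_simpleWalk [Finite V] (hX : ∀ t, @Measurable Ω V _ ⊤ (X t)) (k : ℕ) :
    @Measurable Ω V _ ⊤ (simpleWalk G X k) := by
  have hτ : Measurable (simpleTime G X k) := measurable_sInf_setOf fun s =>
    measurableSet_setOf_of_dependsOn hX (dependsOn_isNthSimpleTime k s)
  intro S _
  have : simpleWalk G X k ⁻¹' S = ⋃ L, simpleTime G X k ⁻¹' {L} ∩ X L ⁻¹' S := by
    ext ω
    simp [simpleWalk]
  rw [this]
  exact .iUnion fun L => (hτ (measurableSet_singleton L)).inter (hX L trivial)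

lemma IsSRW.map [G.LocallyFinite] {Ω' : Type*} [MeasurableSpace Ω'] {Y : ℕ → Ω → V}
    {Y' : ℕ → Ω' → V} {Φ : Ω → Ω'} (hY : IsSRW G μ Y) (hΦ : Measurable Φ)
    (hY' : ∀ k, @Measurable Ω' V _ ⊤ (Y' k)) (hcomp : ∀ k ω, Y' k (Φ ω) = Y k ω) :
    IsSRW G (μ.map Φ) Y' := by
  have hpre t x : Φ ⁻¹' prefixEvent Y' t x = prefixEvent Y t x := by
    ext ω
    simp [prefixEvent, hcomp]
  refine ⟨hY', fun t x h0 => ?_⟩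
  rw [Measure.map_apply hΦ (measurableSet_prefixEvent hY' t x), hpre] at h0
  obtain ⟨hstep, hadj⟩ := hY.2 t x h0
  refine ⟨fun w hw => ?_, ?_⟩
  · rw [cond_map_apply hΦ (A := {ω | Y' (t + 1) ω = w}) (hY' (t + 1) (measurableSet_singleton w))
      (measurableSet_prefixEvent hY' t x), hpre]
    simpa [hcomp] using hstep w hw
  · rw [cond_map_apply hΦ (A := {ω | G.Adj (x t) (Y' (t + 1) ω)}) (hY' (t + 1) trivial)
      (measurableSet_prefixEvent hY' t x), hpre]
    simpa [hcomp] using hadj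

/-- `hcover` only speaks about sample spaces in `Type`, so the walk is first carried over to its
path space `ℕ → Fin (card V)`. -/
theorem IsSRW.lintegral_vertexCoverTime_le [Fintype V] [G.LocallyFinite] {c : ℝ≥0∞}
    (hcover : ∀ (Ω' : Type) [MeasurableSpace Ω'] (μ' : Measure Ω') [IsProbabilityMeasure μ']
      (Y : ℕ → Ω' → V), IsSRW G μ' Y → ∫⁻ ω, (vertexCoverTime Y ω : ℝ≥0∞) ∂μ' ≤ c)
    [IsProbabilityMeasure μ] {Y : ℕ → Ω → V} (hY : IsSRW G μ Y) :
    ∫⁻ ω, (vertexCoverTime Y ω : ℝ≥0∞) ∂μ ≤ c := by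
  let e := Fintype.equivFin V
  let Φ : Ω → ℕ → Fin (Fintype.card V) := fun ω k => e (Y k ω)
  let Y' : ℕ → (ℕ → Fin (Fintype.card V)) → V := fun k ω' => e.symm (ω' k)
  have hΦ : Measurable Φ := measurable_pi_lambda _ fun k => measurable_from_top.comp (hY.1 k)
  have hY' k : @Measurable _ V _ ⊤ (Y' k) :=
    (@measurable_of_finite _ V _ ⊤ _ _ e.symm).comp (measurable_pi_apply k)
  have := Measure.isProbabilityMeasure_map (μ := μ) hΦ.aemeasurable
  have h := hcover _ (μ.map Φ) Y' (hY.map hΦ hY' fun k ω => e.symm_apply_apply _)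
  have hvct ω : vertexCoverTime Y' (Φ ω) = vertexCoverTime Y ω := by
    simp [vertexCoverTime, Y', Φ]
  simpa only [lintegral_map (measurable_vertexCoverTime hY') hΦ, hvct] using h

namespace IsGRW

variable [Finite V] [G.LocallyFinite] [IsFiniteMeasure μ]

lemma ae_isGreedyPath (hX : IsGRW G μ X) : ∀ᵐ ω ∂μ, IsGreedyPath G (X · ω) := by
  have hstep s : ∀ᵐ ω ∂μ, G.Adj (X s ω) (X (s + 1) ω) ∧
      (¬ IsSimpleTime G (X · ω) s → X (s + 1) ω ∈ freshNbrs G (X · ω) s (X s ω)) := by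
    refine ae_iff.2 (measure_eq_zero_of_forall_prefixEvent hX.1 s fun x h0 => ?_)
    obtain ⟨hfresh, -, hadj⟩ := hX.2 s x h0
    have hP := measurableSet_prefixEvent hX.1 s x
    have hadj_null := measure_diff_eq_zero_of_cond_eq_one (hX.1 (s + 1) trivial) hP hadj
    have hfresh_null : μ (prefixEvent X s x \
        {ω | ¬ IsSimpleTime G x s → X (s + 1) ω ∈ freshNbrs G x s (x s)}) = 0 := by
      by_cases hx : IsSimpleTime G x s
      · simp [hx]
      · simp only [hx, not_false_eq_true, forall_const]
        exact measure_diff_eq_zero_of_cond_eq_one (hX.1 (s + 1) trivial) hP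
          (hfresh (nonempty_iff_ne_empty.2 hx))
    refine measure_mono_null (fun ω ⟨hω, hbad⟩ => ?_) (measure_union_null hadj_null hfresh_null)
    have hfr : freshNbrs G (X · ω) s (X s ω) = freshNbrs G x s (x s) := dependsOn_freshNbrs s hω
    by_contra hgood
    simp only [mem_union, mem_sdiff, not_or, not_and, not_not] at hgood
    refine hbad ⟨hω s le_rfl ▸ hgood.1 hω, fun hns => hfr ▸ hgood.2 hω fun hx => hns ?_⟩
    exact hfr.trans hx
  filter_upwards [ae_all_iff.2 hstep] with ω hω
  exact ⟨fun s => (hω s).1, fun s => (hω s).2⟩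

/-- Decompose according to the time `L` at which the walk completes the trace `x 0, …, x t`: that
time is simple, so the step after it is uniform over the neighbours of `x t`, and on greedy paths
it is the next step of the simple walk. -/
lemma measure_prefixEvent_inter_simpleWalk_succ (hX : IsGRW G μ X)
    (heven : ∀ v, Even (G.degree v)) {t : ℕ} {x : ℕ → V} {w : V} (hw : G.Adj (x t) w) :
    μ (prefixEvent (simpleWalk G X) t x ∩ {ω | simpleWalk G X (t + 1) ω = w}) =
      (G.degree (x t) : ℝ≥0∞)⁻¹ * μ (prefixEvent (simpleWalk G X) t x) := by
  have htrace : ∀ᵐ ω ∂μ,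
      (ω ∈ prefixEvent (simpleWalk G X) t x ∩ {ω | simpleWalk G X (t + 1) ω = w} ↔
        ω ∈ ⋃ L, {ω | CompletesTrace G x t L (X · ω)} ∩ {ω | X (L + 1) ω = w}) ∧
      (ω ∈ prefixEvent (simpleWalk G X) t x ↔ ω ∈ ⋃ L, {ω | CompletesTrace G x t L (X · ω)}) := by
    filter_upwards [hX.ae_isGreedyPath] with ω hp
    simp only [mem_iUnion, mem_inter_iff, mem_ofPred_eq, hp.completesTrace_iff_simpleWalk,
      hp.simpleWalk_succ heven, and_assoc, exists_eq_left', and_self]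
  rw [measure_congr (Filter.eventuallyEq_set.2 (htrace.mono fun _ h => h.1)),
    measure_congr (Filter.eventuallyEq_set.2 (htrace.mono fun _ h => h.2))]
  refine measure_iUnion_inter_eq_mul_of_dependsOn hX.1 (dependsOn_completesTrace x t)
    (fun _ _ _ h h' => h.unique h') (F := fun L => {ω | X (L + 1) ω = w})
    (fun L => hX.1 (L + 1) (measurableSet_singleton w)) fun L x' hx' h0 => ?_
  have hstep := (hX.2 L x' h0).2.1 hx'.isSimpleTime w (hx'.apply_eq ▸ hw)
  rwa [hx'.apply_eq, cond_eq_iff_measure_inter_eq (measurableSet_prefixEvent hX.1 L x') h0]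
    at hstep

theorem isSRW_simpleWalk (hX : IsGRW G μ X) (heven : ∀ v, Even (G.degree v)) :
    IsSRW G μ (simpleWalk G X) := by
  have hY := measurable_simpleWalk (G := G) hX.1
  refine ⟨hY, fun t x h0 => ⟨fun w hw => ?_, ?_⟩⟩
  · rw [cond_eq_iff_measure_inter_eq (measurableSet_prefixEvent hY t x) h0]
    exact hX.measure_prefixEvent_inter_simpleWalk_succ heven hw
  · rw [cond_eq_iff_measure_inter_eq (measurableSet_prefixEvent hY t x) h0, one_mul]
    refine measure_congr (Filter.eventuallyEq_set.2 ?_)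
    filter_upwards [hX.ae_isGreedyPath] with ω hp
    refine ⟨fun h => h.1, fun h => ⟨h, ?_⟩⟩
    have : simpleWalk G X t ω = x t := h t le_rfl
    simp only [mem_ofPred_eq]
    rw [hp.simpleWalk_succ heven, ← this]
    exact hp.adj _

end IsGRW

end Measure

end GRW

theorem grw_stmt18_general {V : Type*} [Fintype V] (G : SimpleGraph V)
    [DecidableRel G.Adj] (heven : ∀ v : V, Even (G.degree v)) (C : ℝ)
    (hcover : ∀ (Ω' : Type) [MeasurableSpace Ω'] (μ' : MeasureTheory.Measure Ω')
      [MeasureTheory.IsProbabilityMeasure μ'] (Y : ℕ → Ω' → V), GRW.IsSRW G μ' Y →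
        ∫⁻ ω, ((GRW.vertexCoverTime Y ω : ℕ∞) : ℝ≥0∞) ∂μ' ≤ ENNReal.ofReal C)
    {Ω : Type*} [MeasurableSpace Ω] (μ : MeasureTheory.Measure Ω)
    [MeasureTheory.IsProbabilityMeasure μ] (X : ℕ → Ω → V)
    (hX : GRW.IsGRW G μ X) :
    ∫⁻ ω, ((GRW.edgeCoverTime G X ω : ℕ∞) : ℝ≥0∞) ∂μ ≤
      (G.edgeFinset.card : ℝ≥0∞) + ENNReal.ofReal C := by
  calc ∫⁻ ω, (GRW.edgeCoverTime G X ω : ℝ≥0∞) ∂μ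
      ≤ ∫⁻ ω, ((GRW.vertexCoverTime (GRW.simpleWalk G X) ω : ℝ≥0∞) + G.edgeFinset.card) ∂μ :=
        lintegral_mono_ae <| hX.ae_isGreedyPath.mono fun ω hp => by
          exact_mod_cast ENat.toENNReal_le.2 hp.edgeCoverTime_le
    _ = ∫⁻ ω, (GRW.vertexCoverTime (GRW.simpleWalk G X) ω : ℝ≥0∞) ∂μ + G.edgeFinset.card := by
        rw [lintegral_add_right _ measurable_const, lintegral_const, measure_univ, mul_one]
    _ ≤ ENNReal.ofReal C + G.edgeFinset.card := by
        gcongr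
        exact (hX.isSRW_simpleWalk heven).lintegral_vertexCoverTime_le hcover
    _ = _ := add_comm _ _

/-- if all degrees of a finite graph `G` are even and the expected vertex
cover time of `G` by simple random walk (started anywhere, i.e. for every process
satisfying the SRW conditions) is at most `C`, then for any rule `𝓡` the expected edge
cover time of `G` by greedy random walk is at most `|E| + C`. -/
theorem grw_stmt18 {V : Type*} [Fintype V] [DecidableEq V] (G : SimpleGraph V)
    [DecidableRel G.Adj] (heven : ∀ v : V, Even (G.degree v)) (C : ℝ) (hC : 0 ≤ C)
    (hcover : ∀ (Ω' : Type) [MeasurableSpace Ω'] (μ' : MeasureTheory.Measure Ω')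
      [MeasureTheory.IsProbabilityMeasure μ'] (Y : ℕ → Ω' → V), GRW.IsSRW G μ' Y →
        ∫⁻ ω, ((GRW.vertexCoverTime Y ω : ℕ∞) : ℝ≥0∞) ∂μ' ≤ ENNReal.ofReal C)
    {Ω : Type*} [MeasurableSpace Ω] (μ : MeasureTheory.Measure Ω)
    [MeasureTheory.IsProbabilityMeasure μ] (X : ℕ → Ω → V)
    (hX : GRW.IsGRW G μ X) :
    ∫⁻ ω, ((GRW.edgeCoverTime G X ω : ℕ∞) : ℝ≥0∞) ∂μ ≤
      (G.edgeFinset.card : ℝ≥0∞) + ENNReal.ofReal C :=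
  grw_stmt18_general G heven C hcover μ X hX
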